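/- arXiv:2107.00957 — 4 statements merged into one kernel-verified Lean document; each statement's English description precedes it below -/
import Mathlib

section
/- Let N be a positive integer and let y, y' ∈ (0,1)^N with δ_i = y'_i − y_i for each i. Let (X, X') be a pair of random vectors taking values in {0,1}^N × {0,1}^N such that for every i ∈ {1,…,N}: P(X_i = 1) = y_i; conditionally on X_i = 1, X'_i = 0 with probability max(−δ_i, 0)/y_i and X'_i = 1 otherwise; conditionally on X_i = 0, X'_i = 1 with probability max(δ_i, 0)/(1 − y_i) and X'_i = 0 otherwise. Then E[X'_i] = y'_i for every i ∈ {1,…,N}, and E[ ∑_{i=1}^{N} |X'_i − X_i| ] = ∑_{i=1}^{N} |y'_i − y_i|. -/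
/-!
Coordinatewise, `X'ᵢ = Xᵢ - 1[Xᵢ = 1, X'ᵢ = 0] + 1[Xᵢ = 0, X'ᵢ = 1]` and `|X'ᵢ - Xᵢ|` is the sum
of these two indicators. Multiplying the conditional switching probabilities by `P(Xᵢ = 1) = yᵢ`
and `P(Xᵢ = 0) = 1 - yᵢ` gives the two events probabilities `max (-δᵢ) 0` and `max δᵢ 0`, whose
difference is `δᵢ` and whose sum is `|δᵢ|`.
-/

open MeasureTheory

section BinaryPair

variable {Ω : Type*} [MeasurableSpace Ω] {μ : Measure Ω} [IsFiniteMeasure μ] {U V : Ω → ℝ}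

lemma integrable_indicator_one {s : Set Ω} (hs : MeasurableSet s) :
    Integrable (s.indicator (1 : Ω → ℝ)) μ :=
  (integrable_const 1).indicator hs

lemma integrable_of_binary (hU : Measurable U) (hU01 : ∀ ω, U ω = 0 ∨ U ω = 1) :
    Integrable U μ :=
  .of_bound hU.aestronglyMeasurable 1 <| ae_of_all _ fun ω => by
    rcases hU01 ω with h | h <;> simp [h]

theorem integral_eq_measureReal_sub_add_of_binary (hU : Measurable U) (hV : Measurable V)
    (hU01 : ∀ ω, U ω = 0 ∨ U ω = 1) (hV01 : ∀ ω, V ω = 0 ∨ V ω = 1) :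
    ∫ ω, V ω ∂μ = μ.real {ω | U ω = 1} - μ.real ({ω | V ω = 0} ∩ {ω | U ω = 1})
      + μ.real ({ω | V ω = 1} ∩ {ω | U ω = 0}) := by
  have hU1 : MeasurableSet {ω | U ω = 1} := hU (measurableSet_singleton 1)
  have hdown : MeasurableSet ({ω | V ω = 0} ∩ {ω | U ω = 1}) :=
    (hV (measurableSet_singleton 0)).inter hU1
  have hup : MeasurableSet ({ω | V ω = 1} ∩ {ω | U ω = 0}) :=
    (hV (measurableSet_singleton 1)).inter (hU (measurableSet_singleton 0))
  have hdecomp : V = {ω | U ω = 1}.indicator 1 - ({ω | V ω = 0} ∩ {ω | U ω = 1}).indicator 1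
      + ({ω | V ω = 1} ∩ {ω | U ω = 0}).indicator 1 := by
    funext ω
    rcases hU01 ω with hu | hu <;> rcases hV01 ω with hv | hv <;> simp [Set.indicator, hu, hv]
  conv_lhs => rw [hdecomp]
  rw [integral_add' ((integrable_indicator_one hU1).sub (integrable_indicator_one hdown))
    (integrable_indicator_one hup), integral_sub' (integrable_indicator_one hU1)
    (integrable_indicator_one hdown), integral_indicator_one hU1, integral_indicator_one hdown,
    integral_indicator_one hup]

theorem integral_abs_sub_eq_measureReal_add_of_binary (hU : Measurable U) (hV : Measurable V)
    (hU01 : ∀ ω, U ω = 0 ∨ U ω = 1) (hV01 : ∀ ω, V ω = 0 ∨ V ω = 1) :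
    ∫ ω, |V ω - U ω| ∂μ = μ.real ({ω | V ω = 0} ∩ {ω | U ω = 1})
      + μ.real ({ω | V ω = 1} ∩ {ω | U ω = 0}) := by
  have hdown : MeasurableSet ({ω | V ω = 0} ∩ {ω | U ω = 1}) :=
    (hV (measurableSet_singleton 0)).inter (hU (measurableSet_singleton 1))
  have hup : MeasurableSet ({ω | V ω = 1} ∩ {ω | U ω = 0}) :=
    (hV (measurableSet_singleton 1)).inter (hU (measurableSet_singleton 0))
  have hdecomp : (fun ω => |V ω - U ω|) = ({ω | V ω = 0} ∩ {ω | U ω = 1}).indicator 1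
      + ({ω | V ω = 1} ∩ {ω | U ω = 0}).indicator 1 := by
    funext ω
    rcases hU01 ω with hu | hu <;> rcases hV01 ω with hv | hv <;> simp [Set.indicator, hu, hv]
  conv_lhs => rw [hdecomp]
  rw [integral_add' (integrable_indicator_one hdown) (integrable_indicator_one hup),
    integral_indicator_one hdown, integral_indicator_one hup]

end BinaryPair

theorem measureReal_eq_of_eq_ofReal_div_mul {Ω : Type*} [MeasurableSpace Ω] {μ : Measure Ω}
    {S T : Set Ω} {c p : ℝ} (hc : 0 ≤ c) (hp : 0 < p) (hT : μ.real T = p)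
    (hS : μ S = ENNReal.ofReal (c / p) * μ T) : μ.real S = c := by
  rw [measureReal_def, hS, ENNReal.toReal_mul, ← measureReal_def, hT,
    ENNReal.toReal_ofReal (div_nonneg hc hp.le), div_mul_cancel₀ c hp.ne']

theorem coupled_rounding_general
    {Ω : Type*} [MeasurableSpace Ω] (μ : Measure Ω) [IsProbabilityMeasure μ]
    (N : ℕ)
    (y y' : Fin N → ℝ)
    (hy : ∀ i, y i ∈ Set.Ioo (0 : ℝ) 1)
    (X X' : Ω → Fin N → ℝ)
    (hXmeas : ∀ i, Measurable fun ω => X ω i)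
    (hX'meas : ∀ i, Measurable fun ω => X' ω i)
    (hX01 : ∀ ω i, X ω i = 0 ∨ X ω i = 1)
    (hX'01 : ∀ ω i, X' ω i = 0 ∨ X' ω i = 1)
    (hmarg : ∀ i, μ {ω | X ω i = 1} = ENNReal.ofReal (y i))
    (hcond1 : ∀ i, μ ({ω | X' ω i = 0} ∩ {ω | X ω i = 1})
      = ENNReal.ofReal (max (-(y' i - y i)) 0 / y i) * μ {ω | X ω i = 1})
    (hcond0 : ∀ i, μ ({ω | X' ω i = 1} ∩ {ω | X ω i = 0})
      = ENNReal.ofReal (max (y' i - y i) 0 / (1 - y i)) * μ {ω | X ω i = 0}) :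
    (∀ i, (∫ ω, X' ω i ∂μ) = y' i) ∧
      (∫ ω, ∑ i, |X' ω i - X ω i| ∂μ) = ∑ i, |y' i - y i| := by
  have hX0 (i : Fin N) : {ω | X ω i = 0} = {ω | X ω i = 1}ᶜ := by
    ext ω
    rcases hX01 ω i with h | h <;> simp [h]
  have hreal1 (i : Fin N) : μ.real {ω | X ω i = 1} = y i := by
    rw [measureReal_def, hmarg i, ENNReal.toReal_ofReal (hy i).1.le]
  have hreal0 (i : Fin N) : μ.real {ω | X ω i = 0} = 1 - y i := by
    rw [hX0 i, probReal_compl_eq_one_sub (s := {ω | X ω i = 1}) (hXmeas i (measurableSet_singleton 1)), hreal1 i]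
  have hdown (i : Fin N) :
      μ.real ({ω | X' ω i = 0} ∩ {ω | X ω i = 1}) = max (-(y' i - y i)) 0 :=
    measureReal_eq_of_eq_ofReal_div_mul (le_max_right _ _) (hy i).1 (hreal1 i) (hcond1 i)
  have hup (i : Fin N) : μ.real ({ω | X' ω i = 1} ∩ {ω | X ω i = 0}) = max (y' i - y i) 0 :=
    measureReal_eq_of_eq_ofReal_div_mul (le_max_right _ _) (sub_pos.2 (hy i).2) (hreal0 i)
      (hcond0 i)
  refine ⟨fun i => ?_, ?_⟩
  · rw [integral_eq_measureReal_sub_add_of_binary (hXmeas i) (hX'meas i) (hX01 · i) (hX'01 · i),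
      hreal1, hdown, hup]
    linarith [max_zero_sub_max_neg_zero_eq_self (y' i - y i)]
  · have hint (i : Fin N) : Integrable (fun ω => |X' ω i - X ω i|) μ :=
      ((integrable_of_binary (hX'meas i) (hX'01 · i)).sub
        (integrable_of_binary (hXmeas i) (hX01 · i))).abs
    rw [integral_finsetSum _ fun i _ => hint i]
    refine Finset.sum_congr rfl fun i _ => ?_
    rw [integral_abs_sub_eq_measureReal_add_of_binary (hXmeas i) (hX'meas i) (hX01 · i)
      (hX'01 · i), hdown, hup, add_comm, max_zero_add_max_neg_zero_eq_abs_self]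

/-- **Coupled rounding (Theorem 1).**
Let `y, y' ∈ (0,1)^N` with `δ i = y' i - y i`.  Let `(X, X')` be a pair of random
`{0,1}^N`-valued vectors such that for every `i`: `P(X i = 1) = y i`; conditionally on
`X i = 1`, `X' i = 0` with probability `max (-δ i) 0 / y i` (and `X' i = 1` otherwise);
conditionally on `X i = 0`, `X' i = 1` with probability `max (δ i) 0 / (1 - y i)`
(and `X' i = 0` otherwise).  Then `E[X' i] = y' i` for every `i`, and
`E[∑ i, |X' i - X i|] = ∑ i, |y' i - y i|`. -/
theorem coupled_rounding
    {Ω : Type*} [MeasurableSpace Ω] (μ : Measure Ω) [IsProbabilityMeasure μ]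
    (N : ℕ) (hN : 0 < N)
    (y y' : Fin N → ℝ)
    (hy : ∀ i, y i ∈ Set.Ioo (0 : ℝ) 1)
    (hy' : ∀ i, y' i ∈ Set.Ioo (0 : ℝ) 1)
    (X X' : Ω → Fin N → ℝ)
    (hXmeas : ∀ i, Measurable fun ω => X ω i)
    (hX'meas : ∀ i, Measurable fun ω => X' ω i)
    (hX01 : ∀ ω i, X ω i = 0 ∨ X ω i = 1)
    (hX'01 : ∀ ω i, X' ω i = 0 ∨ X' ω i = 1)
    (hmarg : ∀ i, μ {ω | X ω i = 1} = ENNReal.ofReal (y i))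
    (hcond1 : ∀ i, μ ({ω | X' ω i = 0} ∩ {ω | X ω i = 1})
      = ENNReal.ofReal (max (-(y' i - y i)) 0 / y i) * μ {ω | X ω i = 1})
    (hcond0 : ∀ i, μ ({ω | X' ω i = 1} ∩ {ω | X ω i = 0})
      = ENNReal.ofReal (max (y' i - y i) 0 / (1 - y i)) * μ {ω | X ω i = 0}) :
    (∀ i, (∫ ω, X' ω i ∂μ) = y' i) ∧
      (∫ ω, ∑ i, |X' ω i - X ω i| ∂μ) = ∑ i, |y' i - y i| :=
  coupled_rounding_general μ N y y' hy X X' hXmeas hX'meas hX01 hX'01 hmarg hcond1 hcond0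
end

section
/- Let T ≥ 2 be an integer, let ρ, η, L > 0, and let Φ be a differentiable convex function on an open convex set D ⊆ ℝ^N, with Bregman divergence D_Φ(a,b) = Φ(a) − Φ(b) − ⟨∇Φ(b), a − b⟩. Let y_1,…,y_T and z_2,…,z_T be points of D such that for every t ∈ {1,…,T−1}: (i) ∇Φ(z_{t+1}) = ∇Φ(y_t) + η g_t for some g_t ∈ ℝ^N with ‖g_t‖_∞ ≤ L; (ii) D_Φ(z_{t+1}, y_t) ≥ (ρ/2)‖z_{t+1} − y_t‖_1² and D_Φ(y_t, y_{t+1}) ≥ (ρ/2)‖y_t − y_{t+1}‖_1²; (iii) D_Φ(y_t, y_{t+1}) + D_Φ(y_{t+1}, z_{t+1}) ≤ D_Φ(y_t, z_{t+1}). Then ∑_{t=1}^{T−1} ‖y_{t+1} − y_t‖_1 ≤ (L η / ρ) T. -/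
/-!
In one step, the symmetrised Bregman divergence `D(y, z) + D(z, y)` equals the dual step
`η ⟪g, z - y⟫ ≤ η L r` with `r = ‖z - y‖₁`, so strong convexity gives
`D(y, z) ≤ η L r - ρ r² / 2 ≤ (η L)² / (2ρ)`. The Pythagorean inequality and `D(y', z) ≥ 0` bound
`D(y, y')` by the same quantity, and strong convexity once more gives `‖y' - y‖₁ ≤ η L / ρ`.
Summing over the `T - 1` steps gives the claim.
-/

open Finset

section Bregman

variable {E : Type*} [NormedAddCommGroup E] [NormedSpace ℝ E]

noncomputable def bregmanDiv (Φ : E → ℝ) (a b : E) : ℝ :=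
  Φ a - Φ b - fderiv ℝ Φ b (a - b)

theorem ConvexOn.fderiv_sub_le {D : Set E} {Φ : E → ℝ} (hΦ : ConvexOn ℝ D Φ) {a b : E}
    (ha : a ∈ D) (hb : b ∈ D) (hdiff : DifferentiableAt ℝ Φ b) :
    fderiv ℝ Φ b (a - b) ≤ Φ a - Φ b := by
  let ℓ : ℝ →ᵃ[ℝ] E := AffineMap.lineMap b a
  have hℓ0 : ℓ 0 = b := AffineMap.lineMap_apply_zero b a
  have hℓ1 : ℓ 1 = a := AffineMap.lineMap_apply_one b a
  have hderiv : HasDerivAt (Φ ∘ ℓ) (fderiv ℝ Φ b (a - b)) 0 := by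
    refine HasFDerivAt.comp_hasDerivAt (0 : ℝ) ?_ AffineMap.hasDerivAt_lineMap
    rw [hℓ0]
    exact hdiff.hasFDerivAt
  have hslope := (hΦ.comp_affineMap ℓ).le_slope_of_hasDerivAt
    (by simpa [hℓ0] using hb) (by simpa [hℓ1] using ha) one_pos hderiv
  simpa [slope_def_field, hℓ0, hℓ1] using hslope

theorem bregmanDiv_nonneg {D : Set E} {Φ : E → ℝ} (hΦ : ConvexOn ℝ D Φ) {a b : E}
    (ha : a ∈ D) (hb : b ∈ D) (hdiff : DifferentiableAt ℝ Φ b) :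
    0 ≤ bregmanDiv Φ a b :=
  sub_nonneg.mpr (hΦ.fderiv_sub_le ha hb hdiff)

theorem bregmanDiv_add_bregmanDiv_swap (Φ : E → ℝ) (a b : E) :
    bregmanDiv Φ a b + bregmanDiv Φ b a = (fderiv ℝ Φ a - fderiv ℝ Φ b) (a - b) := by
  simp only [bregmanDiv, sub_apply, ← neg_sub a b, map_neg]
  ring

theorem bregmanDiv_le_sq_div {Φ : E → ℝ} {y z : E} {ρ c r : ℝ} (hρ : 0 < ρ)
    (hstrong : ρ / 2 * r ^ 2 ≤ bregmanDiv Φ z y)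
    (hpair : (fderiv ℝ Φ z - fderiv ℝ Φ y) (z - y) ≤ c * r) :
    bregmanDiv Φ y z ≤ c ^ 2 / (2 * ρ) := by
  have hsym := bregmanDiv_add_bregmanDiv_swap Φ z y
  have hamgm : c * r - ρ / 2 * r ^ 2 ≤ c ^ 2 / (2 * ρ) := by
    rw [le_div_iff₀ (by positivity)]
    nlinarith [sq_nonneg (ρ * r - c)]
  linarith

end Bregman

theorem abs_le_div_of_half_mul_sq_le {ρ c u : ℝ} (hρ : 0 < ρ) (hc : 0 ≤ c)
    (h : ρ / 2 * u ^ 2 ≤ c ^ 2 / (2 * ρ)) : |u| ≤ c / ρ := by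
  refine abs_le_of_sq_le_sq ?_ (by positivity)
  rw [div_pow, le_div_iff₀ (by positivity)]
  rw [le_div_iff₀ (by positivity)] at h
  nlinarith

theorem sum_mul_le_mul_sum_abs {ι : Type*} [Fintype ι] {g : ι → ℝ} {L : ℝ}
    (hg : ∀ i, |g i| ≤ L) (w : ι → ℝ) : ∑ i, g i * w i ≤ L * ∑ i, |w i| := by
  rw [mul_sum]
  refine sum_le_sum fun i _ => ?_
  calc g i * w i ≤ |g i| * |w i| := by rw [← abs_mul]; exact le_abs_self _
    _ ≤ L * |w i| := by gcongr; exact hg i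

theorem oma_movement_bound_general
    (N : ℕ) (T : ℕ)
    (ρ η L : ℝ) (hρ : 0 < ρ) (hη : 0 < η) (hL : 0 < L)
    (D : Set ((Fin N) → ℝ)) (hDopen : IsOpen D)
    (Φ : ((Fin N) → ℝ) → ℝ)
    (hΦdiff : DifferentiableOn ℝ Φ D) (hΦconv : ConvexOn ℝ D Φ)
    (DΦ : ((Fin N) → ℝ) → ((Fin N) → ℝ) → ℝ)
    (hDΦ : ∀ a b, DΦ a b = Φ a - Φ b - fderiv ℝ Φ b (a - b))
    (y z : ℕ → (Fin N) → ℝ) (g : ℕ → (Fin N) → ℝ)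
    (hyD : ∀ t ∈ Finset.Icc 1 T, y t ∈ D)
    (hzD : ∀ t ∈ Finset.Icc 2 T, z t ∈ D)
    (hgrad : ∀ t ∈ Finset.Icc 1 (T - 1), ∀ v : (Fin N) → ℝ,
      fderiv ℝ Φ (z (t + 1)) v = fderiv ℝ Φ (y t) v + η * ∑ i, g t i * v i)
    (hgbound : ∀ t ∈ Finset.Icc 1 (T - 1), ∀ i, |g t i| ≤ L)
    (hstrong₁ : ∀ t ∈ Finset.Icc 1 (T - 1),
      ρ / 2 * (∑ i, |z (t + 1) i - y t i|) ^ 2 ≤ DΦ (z (t + 1)) (y t))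
    (hstrong₂ : ∀ t ∈ Finset.Icc 1 (T - 1),
      ρ / 2 * (∑ i, |y t i - y (t + 1) i|) ^ 2 ≤ DΦ (y t) (y (t + 1)))
    (hpyth : ∀ t ∈ Finset.Icc 1 (T - 1),
      DΦ (y t) (y (t + 1)) + DΦ (y (t + 1)) (z (t + 1)) ≤ DΦ (y t) (z (t + 1))) :
    ∑ t ∈ Finset.Icc 1 (T - 1), (∑ i, |y (t + 1) i - y t i|) ≤ L * η / ρ * T := by
  obtain rfl : DΦ = bregmanDiv Φ := funext fun a => funext (hDΦ a)
  have hstep : ∀ t ∈ Icc 1 (T - 1), ∑ i, |y (t + 1) i - y t i| ≤ L * η / ρ := by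
    intro t ht
    obtain ⟨ht₁, htT⟩ := mem_Icc.mp ht
    have hpair : (fderiv ℝ Φ (z (t + 1)) - fderiv ℝ Φ (y t)) (z (t + 1) - y t) ≤
        L * η * ∑ i, |z (t + 1) i - y t i| := by
      rw [sub_apply, hgrad t ht, add_sub_cancel_left, mul_comm L, mul_assoc]
      exact mul_le_mul_of_nonneg_left (sum_mul_le_mul_sum_abs (hgbound t ht) (z (t + 1) - y t)) hη.le
    have hz : z (t + 1) ∈ D := hzD _ (mem_Icc.mpr ⟨by omega, by omega⟩)
    have hnonneg := bregmanDiv_nonneg hΦconv (hyD (t + 1) (mem_Icc.mpr ⟨by omega, by omega⟩)) hz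
      (hΦdiff.differentiableAt (hDopen.mem_nhds hz))
    have hyz := bregmanDiv_le_sq_div hρ (hstrong₁ t ht) hpair
    have hmove := abs_le_div_of_half_mul_sq_le (c := L * η) hρ (by positivity)
      ((hstrong₂ t ht).trans (by linarith [hpyth t ht]))
    simp_rw [abs_sub_comm (y (t + 1) _)]
    exact (le_abs_self _).trans hmove
  calc ∑ t ∈ Icc 1 (T - 1), ∑ i, |y (t + 1) i - y t i|
      ≤ #(Icc 1 (T - 1)) • (L * η / ρ) := sum_le_card_nsmul _ _ _ hstep
    _ ≤ L * η / ρ * T := by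
      rw [Nat.card_Icc, nsmul_eq_mul, mul_comm]
      gcongr
      exact_mod_cast Nat.sub_le T 1

/-- **Movement bound for online mirror ascent iterates (Theorem 2).**
Let `T ≥ 2`, `ρ, η, L > 0`, and `Φ` a differentiable convex function on an open convex
set `D ⊆ ℝ^N`, with Bregman divergence `DΦ a b = Φ a - Φ b - ⟨∇Φ b, a - b⟩`.
Let `y 1, …, y T` and `z 2, …, z T` be points of `D` such that for every
`t ∈ {1, …, T-1}`:
(i) `∇Φ (z (t+1)) = ∇Φ (y t) + η • g t` for some `g t` with `‖g t‖_∞ ≤ L`;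
(ii) `DΦ (z (t+1)) (y t) ≥ (ρ/2) ‖z (t+1) - y t‖₁²` and
     `DΦ (y t) (y (t+1)) ≥ (ρ/2) ‖y t - y (t+1)‖₁²`;
(iii) `DΦ (y t) (y (t+1)) + DΦ (y (t+1)) (z (t+1)) ≤ DΦ (y t) (z (t+1))`.
Then `∑_{t=1}^{T-1} ‖y (t+1) - y t‖₁ ≤ (L η / ρ) T`. -/
theorem oma_movement_bound
    (N : ℕ) (T : ℕ) (hT : 2 ≤ T)
    (ρ η L : ℝ) (hρ : 0 < ρ) (hη : 0 < η) (hL : 0 < L)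
    (D : Set ((Fin N) → ℝ)) (hDopen : IsOpen D) (hDconv : Convex ℝ D)
    (Φ : ((Fin N) → ℝ) → ℝ)
    (hΦdiff : DifferentiableOn ℝ Φ D) (hΦconv : ConvexOn ℝ D Φ)
    (DΦ : ((Fin N) → ℝ) → ((Fin N) → ℝ) → ℝ)
    (hDΦ : ∀ a b, DΦ a b = Φ a - Φ b - fderiv ℝ Φ b (a - b))
    (y z : ℕ → (Fin N) → ℝ) (g : ℕ → (Fin N) → ℝ)
    (hyD : ∀ t ∈ Finset.Icc 1 T, y t ∈ D)
    (hzD : ∀ t ∈ Finset.Icc 2 T, z t ∈ D)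
    (hgrad : ∀ t ∈ Finset.Icc 1 (T - 1), ∀ v : (Fin N) → ℝ,
      fderiv ℝ Φ (z (t + 1)) v = fderiv ℝ Φ (y t) v + η * ∑ i, g t i * v i)
    (hgbound : ∀ t ∈ Finset.Icc 1 (T - 1), ∀ i, |g t i| ≤ L)
    (hstrong₁ : ∀ t ∈ Finset.Icc 1 (T - 1),
      ρ / 2 * (∑ i, |z (t + 1) i - y t i|) ^ 2 ≤ DΦ (z (t + 1)) (y t))
    (hstrong₂ : ∀ t ∈ Finset.Icc 1 (T - 1),
      ρ / 2 * (∑ i, |y t i - y (t + 1) i|) ^ 2 ≤ DΦ (y t) (y (t + 1)))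
    (hpyth : ∀ t ∈ Finset.Icc 1 (T - 1),
      DΦ (y t) (y (t + 1)) + DΦ (y (t + 1)) (z (t + 1)) ≤ DΦ (y t) (z (t + 1))) :
    ∑ t ∈ Finset.Icc 1 (T - 1), (∑ i, |y (t + 1) i - y t i|) ≤ L * η / ρ * T :=
  oma_movement_bound_general N T ρ η L hρ hη hL D hDopen Φ hΦdiff hΦconv DΦ hDΦ y z g hyD hzD hgrad
    hgbound hstrong₁ hstrong₂ hpyth
end

section
/- For every fractional cache state y, the auxiliary gain is a lower bound on the caching gain: L(y) ≤ G(y). -/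
namespace ACAI

/-- `sigma N π i` = number of indices `j ∈ {1,…,i}` with `π j > N`, i.e. the number of
objects among the `i` cheapest that are served from the server. -/
def sigma (N : ℕ) (π : ℕ → ℕ) (i : ℕ) : ℕ :=
  ((Finset.Icc 1 i).filter (fun j => N < π j)).card

/-- `Kmin N k π` = least index `i` with `sigma N π i = k`. -/
noncomputable def Kmin (N k : ℕ) (π : ℕ → ℕ) : ℕ :=
  sInf {i | sigma N π i = k}

/-- `alpha c π i = c (π (i+1)) - c (π i)`. -/
noncomputable def alpha (c : ℕ → ℝ) (π : ℕ → ℕ) (i : ℕ) : ℝ :=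
  c (π (i + 1)) - c (π i)

/-- A fractional cache state: `y ∈ [0,1]^{2N}` with `∑_{i=1}^{N} y i = h` and
`y (i+N) = 1 - y i` for `i ∈ {1,…,N}`. -/
def IsFrac (N h : ℕ) (y : ℕ → ℝ) : Prop :=
  (∀ i ∈ Finset.Icc 1 (2 * N), y i ∈ Set.Icc (0 : ℝ) 1) ∧
  (∑ i ∈ Finset.Icc 1 N, y i = (h : ℝ)) ∧
  (∀ i ∈ Finset.Icc 1 N, y (i + N) = 1 - y i)

/-- An integral cache state: a fractional cache state with `{0,1}` coordinates. -/
def IsInt (N h : ℕ) (y : ℕ → ℝ) : Prop :=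
  IsFrac N h y ∧ ∀ i ∈ Finset.Icc 1 (2 * N), y i = 0 ∨ y i = 1

/-- A request over the augmented catalog `U = {1,…,2N}`: nonnegative costs `c` with
`c (i+N) = c i + cf` for catalog objects `i ∈ {1,…,N}`, and a bijection `π` of
`{1,…,2N}` sorting the costs nondecreasingly and placing each `i ∈ {1,…,N}` before
`i + N`. -/
def Request (N : ℕ) (cf : ℝ) (c : ℕ → ℝ) (π : ℕ → ℕ) : Prop :=
  (∀ i ∈ Finset.Icc 1 (2 * N), 0 ≤ c i) ∧
  (∀ i ∈ Finset.Icc 1 N, c (i + N) = c i + cf) ∧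
  Set.BijOn π (Set.Icc 1 (2 * N)) (Set.Icc 1 (2 * N)) ∧
  (∀ i, 1 ≤ i → i < 2 * N → c (π i) ≤ c (π (i + 1))) ∧
  (∀ j l, j ∈ Set.Icc 1 (2 * N) → l ∈ Set.Icc 1 (2 * N) →
    π j ≤ N → π l = π j + N → j < l)

/-- The caching gain
`G(y) = ∑_{i=1}^{K-1} α_i · min { k - σ_i, (∑_{j=1}^{i} y_{π j}) - σ_i }`. -/
noncomputable def gain (N k : ℕ) (c : ℕ → ℝ) (π : ℕ → ℕ) (y : ℕ → ℝ) : ℝ :=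
  ∑ i ∈ Finset.Icc 1 (Kmin N k π - 1),
    alpha c π i *
      min ((k : ℝ) - sigma N π i) ((∑ j ∈ Finset.Icc 1 i, y (π j)) - sigma N π i)

open Classical in
/-- `Iset N π i = { j ∈ {1,…,i} : π j ≤ N and π j + N ∉ {π 1, …, π i} }`. -/
noncomputable def Iset (N : ℕ) (π : ℕ → ℕ) (i : ℕ) : Finset ℕ :=
  (Finset.Icc 1 i).filter (fun j => π j ≤ N ∧ ∀ l ∈ Finset.Icc 1 i, π l ≠ π j + N)

/-- The auxiliary (multilinear) gain
`L(y) = ∑_{i=1}^{K-1} α_i (k - σ_i) (1 - ∏_{j ∈ I_i} (1 - y_{π j}/(k - σ_i)))`. -/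
noncomputable def aux (N k : ℕ) (c : ℕ → ℝ) (π : ℕ → ℕ) (y : ℕ → ℝ) : ℝ :=
  ∑ i ∈ Finset.Icc 1 (Kmin N k π - 1),
    alpha c π i * ((k : ℝ) - sigma N π i) *
      (1 - ∏ j ∈ Iset N π i, (1 - y (π j) / ((k : ℝ) - sigma N π i)))

/-!
The inequality holds term by term. Fix `i < K` and put `m = k - σ_i ≥ 1`. Every server copy
`π_j > N` with `j ≤ i` is preceded by its catalog original `π_j - N`, and the two `y`-values add
up to `1`; so these pairs contribute exactly `σ_i` to `∑_{j ≤ i} y_{π_j}`, and what remains is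
`∑_{j ∈ I_i} y_{π_j}`. The Weierstrass product inequality `1 - ∑ x_j ≤ ∏ (1 - x_j)` bounds
`m (1 - ∏_{j ∈ I_i} (1 - y_{π_j} / m))` by both `m` and that sum. Finally `α_i ≥ 0` since `π`
sorts the costs, which needs `i < 2N`: this holds because `σ_{2N} = N ≥ k > σ_i`.
-/

open Finset

theorem one_sub_sum_le_prod_one_sub {ι R : Type*} [CommRing R] [LinearOrder R]
    [IsStrictOrderedRing R] (s : Finset ι) {f : ι → R} (hf : ∀ i ∈ s, f i ∈ Set.Icc 0 1) :
    1 - ∑ i ∈ s, f i ≤ ∏ i ∈ s, (1 - f i) := by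
  classical
  induction s using Finset.induction_on with
  | empty => simp
  | insert a s ha ih =>
    rw [sum_insert ha, prod_insert ha]
    obtain ⟨ha0, ha1⟩ := hf a (mem_insert_self a s)
    have hs := ih fun i hi => hf i (mem_insert_of_mem hi)
    have hsum : 0 ≤ ∑ i ∈ s, f i := sum_nonneg fun i hi => (hf i (mem_insert_of_mem hi)).1
    calc 1 - (f a + ∑ i ∈ s, f i) ≤ (1 - f a) * (1 - ∑ i ∈ s, f i) := by nlinarith
      _ ≤ (1 - f a) * ∏ i ∈ s, (1 - f i) := mul_le_mul_of_nonneg_left hs (sub_nonneg.2 ha1)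

theorem mul_one_sub_prod_one_sub_div_le_min {ι : Type*} (s : Finset ι) {x : ι → ℝ} {m : ℝ}
    (hm : 0 < m) (hx : ∀ j ∈ s, x j ∈ Set.Icc 0 m) :
    m * (1 - ∏ j ∈ s, (1 - x j / m)) ≤ min m (∑ j ∈ s, x j) := by
  have hxm : ∀ j ∈ s, x j / m ∈ Set.Icc 0 1 := fun j hj =>
    ⟨div_nonneg (hx j hj).1 hm.le, (div_le_one hm).2 (hx j hj).2⟩
  have hprod_nonneg : 0 ≤ ∏ j ∈ s, (1 - x j / m) :=
    prod_nonneg fun j hj => sub_nonneg.2 (hxm j hj).2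
  have hprod_ge := one_sub_sum_le_prod_one_sub s hxm
  rw [← sum_div] at hprod_ge
  refine le_min (by nlinarith) ?_
  calc m * (1 - ∏ j ∈ s, (1 - x j / m)) ≤ m * ((∑ j ∈ s, x j) / m) :=
        mul_le_mul_of_nonneg_left (by linarith) hm.le
    _ = ∑ j ∈ s, x j := mul_div_cancel₀ _ hm.ne'

theorem sum_eq_card_gt_add_sum_unpaired {N : ℕ} {S : Finset ℕ} {y : ℕ → ℝ}
    (hS : S ⊆ Icc 1 (2 * N)) (hclosed : ∀ u ∈ S, N < u → u - N ∈ S)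
    (hy : ∀ u ∈ Icc 1 N, y (u + N) = 1 - y u) :
    ∑ u ∈ S, y u = #{u ∈ S | N < u} + ∑ u ∈ S with u ≤ N ∧ u + N ∉ S, y u := by
  set P := {u ∈ S | u ≤ N ∧ u + N ∈ S}
  have hhigh : {u ∈ S | N < u} = P.image (· + N) := by
    ext u
    simp only [P, mem_filter, mem_image]
    constructor
    · rintro ⟨hu, hNu⟩
      have := mem_Icc.1 (hS hu)
      exact ⟨u - N, ⟨hclosed u hu hNu, by omega, by rwa [Nat.sub_add_cancel hNu.le]⟩, by omega⟩
    · rintro ⟨v, ⟨hv, -, hvN⟩, rfl⟩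
      exact ⟨hvN, by have := mem_Icc.1 (hS hv); omega⟩
  have hpairs : ∑ u ∈ {u ∈ S | N < u}, y u + ∑ u ∈ P, y u = #P := by
    rw [hhigh, sum_image fun _ _ _ _ => Nat.add_right_cancel, ← sum_add_distrib,
      card_eq_sum_ones, Nat.cast_sum, Nat.cast_one]
    refine sum_congr rfl fun u hu => ?_
    obtain ⟨huS, huN, -⟩ := mem_filter.1 hu
    rw [hy u (mem_Icc.2 ⟨(mem_Icc.1 (hS huS)).1, huN⟩)]
    ring
  have hcard : #{u ∈ S | N < u} = #P := by
    rw [hhigh, card_image_of_injective _ (add_left_injective N)]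
  have hsplit : ∑ u ∈ S, y u = ∑ u ∈ {u ∈ S | N < u}, y u + ∑ u ∈ P, y u
      + ∑ u ∈ S with u ≤ N ∧ u + N ∉ S, y u := by
    rw [← sum_filter_add_sum_filter_not S (N < ·),
      ← sum_filter_add_sum_filter_not {u ∈ S | ¬N < u} (· + N ∈ S), filter_filter,
      filter_filter, add_assoc]
    simp only [P, not_lt]
  rw [hsplit, hpairs, hcard]

section Ordering

variable {N k i : ℕ} {π : ℕ → ℕ}

theorem sigma_mono : Monotone (sigma N π) := fun _ _ hab =>
  card_le_card (filter_subset_filter _ (Icc_subset_Icc_right hab))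

theorem sigma_lt_of_lt_Kmin (h : i < Kmin N k π) : sigma N π i < k := by
  have hne : {i | sigma N π i = k}.Nonempty :=
    Nat.nonempty_of_pos_sInf (by unfold Kmin at h; omega)
  exact lt_of_le_of_ne ((sigma_mono h.le).trans_eq (Nat.sInf_mem hne))
    (Nat.notMem_of_lt_sInf (s := {i | sigma N π i = k}) h)

theorem sigma_eq_card_filter_image (hπ : Set.InjOn π (Icc 1 i)) :
    sigma N π i = #{u ∈ (Icc 1 i).image π | N < u} := by
  rw [sigma, filter_image, card_image_of_injOn (hπ.mono (filter_subset _ _))]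

theorem sum_Iset_eq_sum_filter_image (hπ : Set.InjOn π (Icc 1 i)) (y : ℕ → ℝ) :
    ∑ j ∈ Iset N π i, y (π j)
      = ∑ u ∈ (Icc 1 i).image π with u ≤ N ∧ u + N ∉ (Icc 1 i).image π, y u := by
  rw [filter_image, sum_image (hπ.mono (filter_subset _ _)), Iset]
  refine sum_congr ?_ fun _ _ => rfl
  ext j
  simp only [mem_filter, mem_image, not_exists, not_and]

variable (hbij : Set.BijOn π (Set.Icc 1 (2 * N)) (Set.Icc 1 (2 * N)))
include hbij

theorem injOn_Icc_of_le (hi : i ≤ 2 * N) : Set.InjOn π (Icc 1 i) :=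
  hbij.injOn.mono (by rw [coe_Icc]; exact Set.Icc_subset_Icc_right hi)

theorem image_Icc_subset (hi : i ≤ 2 * N) : (Icc 1 i).image π ⊆ Icc 1 (2 * N) := by
  intro u hu
  obtain ⟨j, hj, rfl⟩ := mem_image.1 hu
  exact mem_Icc.2 (hbij.mapsTo (mem_Icc.1 hj |>.imp_right (·.trans hi)))

theorem sigma_two_mul : sigma N π (2 * N) = N := by
  rw [sigma_eq_card_filter_image (injOn_Icc_of_le hbij le_rfl)]
  have himage : (Icc 1 (2 * N)).image π = Icc 1 (2 * N) := by
    rw [← coe_inj, coe_image, coe_Icc, hbij.image_eq]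
  have hfilter : {u ∈ Icc 1 (2 * N) | N < u} = Icc (N + 1) (2 * N) := by
    ext u; simp only [mem_filter, mem_Icc]; omega
  rw [himage, hfilter, Nat.card_Icc]
  omega

theorem lt_two_mul_of_lt_Kmin (hkN : k ≤ N) (h : i < Kmin N k π) : i < 2 * N := by
  by_contra! hi
  have := (sigma_mono hi).trans_lt (sigma_lt_of_lt_Kmin h)
  rw [sigma_two_mul hbij] at this
  omega

theorem sub_mem_image_Icc
    (hord : ∀ j l, j ∈ Set.Icc 1 (2 * N) → l ∈ Set.Icc 1 (2 * N) →
      π j ≤ N → π l = π j + N → j < l)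
    (hi : i ≤ 2 * N) : ∀ u ∈ (Icc 1 i).image π, N < u → u - N ∈ (Icc 1 i).image π := by
  intro u hu hNu
  obtain ⟨j, hj, rfl⟩ := mem_image.1 hu
  have hj' := mem_Icc.1 hj
  obtain ⟨-, hπj⟩ := hbij.mapsTo (show j ∈ Set.Icc 1 (2 * N) from ⟨hj'.1, hj'.2.trans hi⟩)
  obtain ⟨l, hl, hπl⟩ := hbij.surjOn (show π j - N ∈ Set.Icc 1 (2 * N) from
    ⟨by omega, by omega⟩)
  have hlj : l < j := hord l j hl ⟨hj'.1, hj'.2.trans hi⟩ (by omega) (by omega)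
  exact mem_image.2 ⟨l, mem_Icc.2 ⟨hl.1, by omega⟩, hπl⟩

theorem sum_sub_sigma_eq_sum_Iset
    (hord : ∀ j l, j ∈ Set.Icc 1 (2 * N) → l ∈ Set.Icc 1 (2 * N) →
      π j ≤ N → π l = π j + N → j < l)
    {y : ℕ → ℝ} (hy : ∀ u ∈ Icc 1 N, y (u + N) = 1 - y u) (hi : i ≤ 2 * N) :
    ∑ j ∈ Icc 1 i, y (π j) - sigma N π i = ∑ j ∈ Iset N π i, y (π j) := by
  have hinj := injOn_Icc_of_le hbij hi
  rw [sigma_eq_card_filter_image hinj, sum_Iset_eq_sum_filter_image hinj, ← sum_image hinj,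
    sum_eq_card_gt_add_sum_unpaired (image_Icc_subset hbij hi)
      (sub_mem_image_Icc hbij hord hi) hy]
  ring

end Ordering

theorem aux_le_gain_general
    (N k h : ℕ) (hkh : k ≤ h) (hhN : h ≤ N)
    (cf : ℝ) (c : ℕ → ℝ) (π : ℕ → ℕ)
    (hreq : Request N cf c π)
    (y : ℕ → ℝ) (hy : IsFrac N h y) :
    aux N k c π y ≤ gain N k c π y := by
  obtain ⟨-, -, hbij, hmono, hord⟩ := hreq
  obtain ⟨hy01, -, hyN⟩ := hy
  refine sum_le_sum fun i hi => ?_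
  obtain ⟨hi1, hiK⟩ : 1 ≤ i ∧ i < Kmin N k π := by rw [mem_Icc] at hi; omega
  have hi2N := lt_two_mul_of_lt_Kmin hbij (hkh.trans hhN) hiK
  have hm : (1 : ℝ) ≤ k - sigma N π i := by
    rw [le_sub_iff_add_le']
    exact_mod_cast sigma_lt_of_lt_Kmin hiK
  rw [sum_sub_sigma_eq_sum_Iset hbij hord hyN hi2N.le, mul_assoc]
  refine mul_le_mul_of_nonneg_left
    (mul_one_sub_prod_one_sub_div_le_min _ (by linarith) fun j hj => ?_)
    (sub_nonneg.2 (hmono i hi1 hi2N))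
  have hj : j ∈ Icc 1 i := by simp only [Iset, mem_filter] at hj; exact hj.1
  rw [mem_Icc] at hj
  have hyj := hy01 (π j) (mem_Icc.2 (hbij.mapsTo ⟨hj.1, by omega⟩))
  exact ⟨hyj.1, hyj.2.trans hm⟩

/-- **Lower bound (Proposition 1, first inequality).**
For every fractional cache state `y`, the auxiliary gain is a lower bound on the
caching gain: `L(y) ≤ G(y)`. -/
theorem aux_le_gain
    (N k h : ℕ) (hN : 0 < N) (hk : 0 < k) (hkh : k ≤ h) (hhN : h ≤ N)
    (cf : ℝ) (hcf : 0 < cf) (c : ℕ → ℝ) (π : ℕ → ℕ)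
    (hreq : Request N cf c π)
    (y : ℕ → ℝ) (hy : IsFrac N h y) :
    aux N k c π y ≤ gain N k c π y :=
  aux_le_gain_general N k h hkh hhN cf c π hreq y hy

end ACAI
end

section
/- Let m be a natural number, c > 0 a real number, and y₁,…,y_m real numbers with 0 ≤ y_j ≤ c for all j. Then min{ c, ∑_{j=1}^{m} y_j } ≤ (1 − 1/e)^{−1} · c · ( 1 − ∏_{j=1}^{m} (1 − y_j/c) ). -/
/-!
Set `t = (∑ j, y j) / c`. Since `1 - x ≤ exp (-x)`, the product `∏ j, (1 - y j / c)` is at most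
`exp (-t)`, so it suffices to show `(1 - 1/e) · min 1 t ≤ 1 - exp (-t)` for `t ≥ 0`. For `t ≥ 1` this
is `exp (-t) ≤ exp (-1)`; for `t ≤ 1` it is the convexity of `exp` on the chord from `0` to `-1`.
-/

namespace Real

theorem prod_one_sub_le_exp_neg_sum {ι : Type*} (s : Finset ι) {x : ι → ℝ}
    (hx : ∀ i ∈ s, x i ≤ 1) : ∏ i ∈ s, (1 - x i) ≤ exp (-∑ i ∈ s, x i) := by
  rw [← Finset.sum_neg_distrib, exp_sum]
  exact Finset.prod_le_prod (fun i hi => sub_nonneg.2 (hx i hi)) fun i _ => one_sub_le_exp_neg (x i)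

theorem exp_neg_le_one_sub_add_mul_exp_neg_one {t : ℝ} (h₀ : 0 ≤ t) (h₁ : t ≤ 1) :
    exp (-t) ≤ 1 - t + t * exp (-1) := by
  have := convexOn_exp.2 (Set.mem_univ 0) (Set.mem_univ (-1)) (sub_nonneg.2 h₁) h₀ (by ring)
  simpa [smul_eq_mul, exp_zero] using this

theorem one_sub_exp_neg_one_mul_min_le {t : ℝ} (ht : 0 ≤ t) :
    (1 - exp (-1)) * min 1 t ≤ 1 - exp (-t) := by
  rcases le_total 1 t with h | h
  · rw [min_eq_left h, mul_one]
    linarith [exp_le_exp.2 (neg_le_neg h)]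
  · rw [min_eq_right h]
    linarith [exp_neg_le_one_sub_add_mul_exp_neg_one ht h]

end Real

/-- **Multilinear upper bound on the truncated sum (Lemma E.8).**
Let `c > 0` and `y 1, …, y m ∈ [0, c]`.  Then
`min c (∑ j, y j) ≤ (1 - 1/e)⁻¹ · c · (1 - ∏ j, (1 - y j / c))`. -/
theorem min_le_multilinear
    (m : ℕ) (c : ℝ) (hc : 0 < c) (y : Fin m → ℝ)
    (hy : ∀ j, 0 ≤ y j ∧ y j ≤ c) :
    min c (∑ j, y j) ≤ (1 - 1 / Real.exp 1)⁻¹ * (c * (1 - ∏ j, (1 - y j / c))) := by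
  set t := (∑ j, y j) / c
  have ht : 0 ≤ t := div_nonneg (Finset.sum_nonneg fun j _ => (hy j).1) hc.le
  have hprod : ∏ j, (1 - y j / c) ≤ Real.exp (-t) := by
    simpa only [t, Finset.sum_div] using
      Real.prod_one_sub_le_exp_neg_sum Finset.univ fun j _ => (div_le_one hc).2 (hy j).2
  have hmin : min c (∑ j, y j) = c * min 1 t := by
    rw [mul_min_of_nonneg _ _ hc.le, mul_one, mul_div_cancel₀ _ hc.ne']
  have he : 0 < 1 - Real.exp (-1) := sub_pos.2 (Real.exp_lt_one_iff.2 (by norm_num))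
  rw [one_div, ← Real.exp_neg, le_inv_mul_iff₀ he, hmin, mul_left_comm]
  calc c * ((1 - Real.exp (-1)) * min 1 t) ≤ c * (1 - Real.exp (-t)) :=
        mul_le_mul_of_nonneg_left (Real.one_sub_exp_neg_one_mul_min_le ht) hc.le
    _ ≤ c * (1 - ∏ j, (1 - y j / c)) := by gcongr
end
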